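/- Let Γ be a group acting on a group G by automorphisms, N a Γ-stable normal subgroup, and π¹ : H¹(Γ,G) → H¹(Γ,G/N) the induced map of pointed sets. Suppose κ is an infinite cardinal such that |H¹(Γ,G/N)| ≤ κ and for every 1-cocycle Φ : Γ → G, the twisted cohomology set H¹(Γ_Φ, N) has cardinality at most κ. Then |H¹(Γ,G)| ≤ κ. -/

import Mathlib

universe u

def IsCocycle {Γ G : Type*} [Group Γ] [Group G] [MulDistribMulAction Γ G]
    (Φ : Γ → G) : Prop :=
  ∀ σ τ : Γ, Φ (σ * τ) = Φ σ * σ • Φ τ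

def Cohomologous {Γ G : Type*} [Group Γ] [Group G] [MulDistribMulAction Γ G]
    (Φ Ψ : Γ → G) : Prop :=
  ∃ b : G, ∀ σ : Γ, Ψ σ = b⁻¹ * Φ σ * σ • b

/-- A cocycle with values in `G/N`, represented by a lift `Γ → G`. -/
def CocycleModN {Γ G : Type*} [Group Γ] [Group G] [MulDistribMulAction Γ G]
    (N : Subgroup G) (Φ : Γ → G) : Prop :=
  ∀ σ τ : Γ, (Φ (σ * τ))⁻¹ * (Φ σ * σ • Φ τ) ∈ N

/-- The cohomologous relation for `G/N`-valued cocycles, via lifts. -/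
def CohomologousModN {Γ G : Type*} [Group Γ] [Group G] [MulDistribMulAction Γ G]
    (N : Subgroup G) (Φ Ψ : Γ → G) : Prop :=
  ∃ b : G, ∀ σ : Γ, (Ψ σ)⁻¹ * (b⁻¹ * Φ σ * σ • b) ∈ N

/-- A cocycle for the `Φ`-twisted action, valued in `N`. -/
def TwCocycleN {Γ G : Type*} [Group Γ] [Group G] [MulDistribMulAction Γ G]
    (Φ : Γ → G) (N : Subgroup G) (Ψ : Γ → G) : Prop :=
  (∀ σ : Γ, Ψ σ ∈ N) ∧ ∀ σ τ : Γ, Ψ (σ * τ) = Ψ σ * (Φ σ * σ • Ψ τ * (Φ σ)⁻¹)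

/-- Cohomologous (via an element of `N`) for the `Φ`-twisted action. -/
def TwCohomologousN {Γ G : Type*} [Group Γ] [Group G] [MulDistribMulAction Γ G]
    (Φ : Γ → G) (N : Subgroup G) (Ψ Λ : Γ → G) : Prop :=
  ∃ b ∈ N, ∀ σ : Γ, Λ σ = b⁻¹ * Ψ σ * (Φ σ * σ • b * (Φ σ)⁻¹)

/-- `H¹(Γ,G)`. -/
def H1 (Γ G : Type u) [Group Γ] [Group G] [MulDistribMulAction Γ G] : Type u :=
  Quot (fun Φ Ψ : {f : Γ → G // IsCocycle f} => Cohomologous Φ.1 Ψ.1)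

/-- `H¹(Γ,G/N)` (via lifted cocycles). -/
def H1modN (Γ : Type u) {G : Type u} [Group Γ] [Group G] [MulDistribMulAction Γ G]
    (N : Subgroup G) : Type u :=
  Quot (fun Φ Ψ : {f : Γ → G // CocycleModN N f} => CohomologousModN N Φ.1 Ψ.1)

/-- `H¹(Γ_Φ,N)`, the twisted cohomology set. -/
def H1twN {Γ G : Type u} [Group Γ] [Group G] [MulDistribMulAction Γ G]
    (Φ : Γ → G) (N : Subgroup G) : Type u :=
  Quot (fun Ψ Λ : {f : Γ → G // TwCocycleN Φ N f} => TwCohomologousN Φ N Ψ.1 Λ.1)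

/-! The map `π¹ : H¹(Γ,G) → H¹(Γ,G/N)` has, over the class of a cocycle `Φ`, a fibre covered by
`H¹(Γ_Φ,N)` through `[Ψ] ↦ [Ψ·Φ]`: a cocycle `Θ` lying over `[Φ]` can be moved within its class
so that `Φ⁻¹Θ` takes values in `N`, and then `ΘΦ⁻¹` is a `Φ`-twisted cocycle. Summing over the
fibres gives `|H¹(Γ,G)| ≤ |H¹(Γ,G/N)|·κ ≤ κ·κ = κ`. -/

open Cardinal

variable {Γ G : Type u} [Group Γ] [Group G] [MulDistribMulAction Γ G] {N : Subgroup G}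

theorem IsCocycle.cocycleModN {Φ : Γ → G} (hΦ : IsCocycle Φ) : CocycleModN N Φ :=
  fun σ τ => by simp only [hΦ σ τ, inv_mul_cancel, N.one_mem]

theorem Cohomologous.cohomologousModN {Φ Ψ : Γ → G} (h : Cohomologous Φ Ψ) :
    CohomologousModN N Φ Ψ := by
  obtain ⟨b, hb⟩ := h
  exact ⟨b, fun σ => by simp only [hb σ, inv_mul_cancel, N.one_mem]⟩

namespace CohomologousModN

variable {Φ Ψ Λ : Γ → G}

theorem refl (Φ : Γ → G) : CohomologousModN N Φ Φ :=
  ⟨1, fun σ => by simp only [inv_one, one_mul, smul_one, mul_one, inv_mul_cancel, N.one_mem]⟩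

theorem symm [hN : N.Normal] (h : CohomologousModN N Φ Ψ) : CohomologousModN N Ψ Φ := by
  obtain ⟨b, hb⟩ := h
  refine ⟨b⁻¹, fun σ => ?_⟩
  have e : (Φ σ)⁻¹ * (b⁻¹⁻¹ * Ψ σ * σ • b⁻¹) =
      σ • b * ((Ψ σ)⁻¹ * (b⁻¹ * Φ σ * σ • b))⁻¹ * (σ • b)⁻¹ := by
    rw [smul_inv']; group
  rw [e]
  exact hN.conj_mem _ (N.inv_mem (hb σ)) _

theorem trans [hN : N.Normal] (h : CohomologousModN N Φ Ψ) (h' : CohomologousModN N Ψ Λ) :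
    CohomologousModN N Φ Λ := by
  obtain ⟨b, hb⟩ := h
  obtain ⟨b', hb'⟩ := h'
  refine ⟨b * b', fun σ => ?_⟩
  have e : (Λ σ)⁻¹ * ((b * b')⁻¹ * Φ σ * σ • (b * b')) =
      ((Λ σ)⁻¹ * (b'⁻¹ * Ψ σ * σ • b')) *
        ((σ • b')⁻¹ * ((Ψ σ)⁻¹ * (b⁻¹ * Φ σ * σ • b)) * (σ • b')⁻¹⁻¹) := by
    rw [smul_mul']; group
  rw [e]
  exact N.mul_mem (hb' σ) (hN.conj_mem _ (hb σ) _)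

theorem equivalence [N.Normal] :
    Equivalence fun Φ Ψ : {f : Γ → G // CocycleModN N f} => CohomologousModN N Φ.1 Ψ.1 :=
  ⟨fun Φ => refl Φ.1, symm, trans⟩

end CohomologousModN

theorem IsCocycle.inv_mul_mul_smul {Θ : Γ → G} (hΘ : IsCocycle Θ) (b : G) :
    IsCocycle fun σ => b⁻¹ * Θ σ * σ • b := fun σ τ => by
  show b⁻¹ * Θ (σ * τ) * (σ * τ) • b = b⁻¹ * Θ σ * σ • b * σ • (b⁻¹ * Θ τ * τ • b)
  rw [hΘ σ τ, mul_smul, smul_mul', smul_mul', smul_inv']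
  group

section Twist

variable {Φ : Γ → G}

theorem IsCocycle.mul_twCocycleN (hΦ : IsCocycle Φ) {Ψ : Γ → G} (hΨ : TwCocycleN Φ N Ψ) :
    IsCocycle fun σ => Ψ σ * Φ σ := fun σ τ => by
  show Ψ (σ * τ) * Φ (σ * τ) = Ψ σ * Φ σ * σ • (Ψ τ * Φ τ)
  rw [hΨ.2 σ τ, hΦ σ τ, smul_mul']
  group

theorem IsCocycle.twCocycleN_mul_inv [hN : N.Normal] (hΦ : IsCocycle Φ) {Θ : Γ → G}
    (hΘ : IsCocycle Θ) (hmem : ∀ σ, (Φ σ)⁻¹ * Θ σ ∈ N) :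
    TwCocycleN Φ N fun σ => Θ σ * (Φ σ)⁻¹ := by
  refine ⟨fun σ => ?_, fun σ τ => ?_⟩
  · simpa only [mul_inv_cancel_left] using hN.conj_mem _ (hmem σ) (Φ σ)
  · beta_reduce
    rw [hΘ σ τ, hΦ σ τ, smul_mul', smul_inv']
    group

theorem TwCohomologousN.cohomologous_mul {Ψ Λ : Γ → G} (h : TwCohomologousN Φ N Ψ Λ) :
    Cohomologous (fun σ => Ψ σ * Φ σ) fun σ => Λ σ * Φ σ := by
  obtain ⟨b, -, hb⟩ := h
  exact ⟨b, fun σ => by simp only [hb σ]; group⟩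

end Twist

def H1.mk (Φ : Γ → G) (hΦ : IsCocycle Φ) : H1 Γ G :=
  Quot.mk _ ⟨Φ, hΦ⟩

variable (N) in
def H1.toModN : H1 Γ G → H1modN Γ N :=
  Quot.map (fun Φ => ⟨Φ.1, Φ.2.cocycleModN⟩) fun _ _ h => h.cohomologousModN

def H1twN.twist {Φ : Γ → G} (hΦ : IsCocycle Φ) : H1twN Φ N → H1 Γ G :=
  Quot.lift (fun Ψ => H1.mk _ (hΦ.mul_twCocycleN Ψ.2)) fun _ _ h =>
    Quot.sound h.cohomologous_mul

theorem H1.toModN_preimage_subset_range_twist [N.Normal] {Φ : Γ → G} (hΦ : IsCocycle Φ) :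
    H1.toModN N ⁻¹' {H1.toModN N (H1.mk Φ hΦ)} ⊆ Set.range (H1twN.twist (N := N) hΦ) := by
  intro y hy
  obtain ⟨⟨Θ, hΘ⟩, rfl⟩ := Quot.exists_rep y
  obtain ⟨b, hb⟩ : CohomologousModN N Θ Φ :=
    CohomologousModN.equivalence.eqvGen_iff.mp (Quot.eq.mp hy)
  refine ⟨Quot.mk _ ⟨_, hΦ.twCocycleN_mul_inv (hΘ.inv_mul_mul_smul b) hb⟩, ?_⟩
  exact (Quot.sound ⟨b, fun σ => inv_mul_cancel_right _ _⟩).symm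

theorem H1.mk_preimage_toModN_le [N.Normal] {Φ : Γ → G} (hΦ : IsCocycle Φ) :
    #(H1.toModN N ⁻¹' {H1.toModN N (H1.mk Φ hΦ)}) ≤ #(H1twN Φ N) :=
  (mk_le_mk_of_subset (toModN_preimage_subset_range_twist hΦ)).trans mk_range_le

theorem card_H1_le_general {Γ G : Type u} [Group Γ] [Group G] [MulDistribMulAction Γ G]
    (N : Subgroup G) [N.Normal]
    (κ : Cardinal.{u}) (hκ : Cardinal.aleph0 ≤ κ)
    (h1 : Cardinal.mk (H1modN Γ N) ≤ κ)
    (h2 : ∀ Φ : Γ → G, IsCocycle Φ → Cardinal.mk (H1twN Φ N) ≤ κ) :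
    Cardinal.mk (H1 Γ G) ≤ κ := by
  have hfibre : ∀ c : H1modN Γ N, #(H1.toModN N ⁻¹' {c}) ≤ κ := by
    intro c
    rcases (H1.toModN N ⁻¹' {c}).eq_empty_or_nonempty with hempty | ⟨y, rfl⟩
    · simp [hempty]
    · obtain ⟨⟨Φ, hΦ⟩, rfl⟩ := Quot.exists_rep y
      exact (H1.mk_preimage_toModN_le hΦ).trans (h2 Φ hΦ)
  calc #(H1 Γ G) ≤ #(H1modN Γ N) * κ := mk_le_mk_mul_of_mk_preimage_le _ hfibre
    _ ≤ κ * κ := mul_le_mul_left h1 κ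
    _ = κ := mul_eq_self hκ

/-- If `|H¹(Γ,G/N)| ≤ κ` and `|H¹(Γ_Φ,N)| ≤ κ` for every cocycle `Φ`, with `κ`
infinite, then `|H¹(Γ,G)| ≤ κ`. -/
theorem card_H1_le {Γ G : Type u} [Group Γ] [Group G] [MulDistribMulAction Γ G]
    (N : Subgroup G) [N.Normal] (hstab : ∀ (σ : Γ), ∀ n ∈ N, σ • n ∈ N)
    (κ : Cardinal.{u}) (hκ : Cardinal.aleph0 ≤ κ)
    (h1 : Cardinal.mk (H1modN Γ N) ≤ κ)
    (h2 : ∀ Φ : Γ → G, IsCocycle Φ → Cardinal.mk (H1twN Φ N) ≤ κ) :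
    Cardinal.mk (H1 Γ G) ≤ κ :=
  card_H1_le_general N κ hκ h1 h2
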